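/- arXiv:1702.01588 — 2 statements merged into one kernel-verified Lean document; each statement's English description precedes it below -/
import Mathlib

section
/- Let S and T be Cu-semigroups. There is a natural bijection between the set of Cu-morphisms S → T and the set of compact elements of the bivariant Cu-semigroup [[S,T]] := τ([S,T], ≺): each Cu-morphism φ corresponds to the class of the constant path with value φ, and this class is compact; conversely every compact element of [[S,T]] arises this way. -/
/-- The rationals in the open interval `(0,1)`, used as index set for paths. -/
abbrev Iq : Type := {q : ℚ // 0 < q ∧ q < 1}

lemma Iq.exists_gt (l : Iq) : ∃ m : Iq, l.1 < m.1 := by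
  obtain ⟨h0, h1⟩ := l.2
  exact ⟨⟨(l.1 + 1) / 2, by constructor <;> linarith⟩, by show l.1 < (l.1 + 1) / 2; linarith⟩

/-- The sequential way-below (compact containment) relation in a preordered set. -/
def CuWayBelow {S : Type*} [Preorder S] (x y : S) : Prop :=
  ∀ z : ℕ → S, Monotone z → ∀ s : S, IsLUB (Set.range z) s → y ≤ s → ∃ k, x ≤ z k

/-- A `P`-semigroup: a commutative monoid with an additive transitive relation. -/
structure PSgp (M : Type*) [AddCommMonoid M] where
  prec : M → M → Prop
  trans : ∀ ⦃a b c : M⦄, prec a b → prec b c → prec a c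
  zero_prec : ∀ a : M, prec 0 a
  add_prec : ∀ ⦃a b c d : M⦄, prec a b → prec c d → prec (a + c) (b + d)

namespace PSgp

variable {M : Type*} [AddCommMonoid M]

/-- A path in a `P`-semigroup, indexed by the rationals in `(0,1)`. -/
def IsPath (P : PSgp M) (f : Iq → M) : Prop :=
  ∀ ⦃l m : Iq⦄, l.1 < m.1 → P.prec (f l) (f m)

/-- The type of paths in a `P`-semigroup. -/
def Path (P : PSgp M) : Type _ := {f : Iq → M // P.IsPath f}

variable {P : PSgp M}

instance : Add P.Path :=
  ⟨fun f g => ⟨fun l => f.1 l + g.1 l, fun _ _ h => P.add_prec (f.2 h) (g.2 h)⟩⟩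

instance : Zero P.Path := ⟨⟨fun _ => 0, fun _ _ _ => P.zero_prec 0⟩⟩

lemma path_add_apply (f g : P.Path) (l : Iq) : (f + g).1 l = f.1 l + g.1 l := rfl

/-- The pre-order relation between paths. -/
def pLe (f g : P.Path) : Prop := ∀ l : Iq, ∃ m : Iq, P.prec (f.1 l) (g.1 m)

lemma pLe_refl (f : P.Path) : pLe f f := fun l => by
  obtain ⟨m, hm⟩ := Iq.exists_gt l
  exact ⟨m, f.2 hm⟩

lemma pLe_trans {f g h : P.Path} (h1 : pLe f g) (h2 : pLe g h) : pLe f h := fun l => by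
  obtain ⟨m, hm⟩ := h1 l
  obtain ⟨m', hm'⟩ := h2 m
  exact ⟨m', P.trans hm hm'⟩

lemma pLe_add {f g f' g' : P.Path} (h1 : pLe f f') (h2 : pLe g g') : pLe (f + g) (f' + g') := by
  intro l
  obtain ⟨m1, hm1⟩ := h1 l
  obtain ⟨m2, hm2⟩ := h2 l
  have hmem : 0 < max m1.1 m2.1 ∧ max m1.1 m2.1 < 1 :=
    ⟨lt_max_of_lt_left m1.2.1, max_lt m1.2.2 m2.2.2⟩
  obtain ⟨μ, hμ⟩ := Iq.exists_gt ⟨max m1.1 m2.1, hmem⟩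
  have e1 : m1.1 < μ.1 := lt_of_le_of_lt (le_max_left _ _) hμ
  have e2 : m2.1 < μ.1 := lt_of_le_of_lt (le_max_right _ _) hμ
  exact ⟨μ, P.add_prec (P.trans hm1 (f'.2 e1)) (P.trans hm2 (g'.2 e2))⟩

instance pathSetoid (P : PSgp M) : Setoid P.Path where
  r f g := pLe f g ∧ pLe g f
  iseqv := ⟨fun f => ⟨pLe_refl f, pLe_refl f⟩, fun h => ⟨h.2, h.1⟩,
    fun h1 h2 => ⟨pLe_trans h1.1 h2.1, pLe_trans h2.2 h1.2⟩⟩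

/-- The path construction `τ(S)`: equivalence classes of paths. -/
abbrev Tau (P : PSgp M) : Type _ := Quotient (pathSetoid P)

def addT : Tau P → Tau P → Tau P :=
  Quotient.map₂ (· + ·) fun _ _ hf _ _ hg => ⟨pLe_add hf.1 hg.1, pLe_add hf.2 hg.2⟩

lemma addT_mk (f g : P.Path) : addT ⟦f⟧ ⟦g⟧ = ⟦f + g⟧ := rfl

lemma path_add_assoc (f g h : P.Path) : f + g + h = f + (g + h) :=
  Subtype.ext (funext fun _ => add_assoc _ _ _)

lemma path_add_comm (f g : P.Path) : f + g = g + f :=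
  Subtype.ext (funext fun _ => add_comm _ _)

lemma path_zero_add (f : P.Path) : 0 + f = f :=
  Subtype.ext (funext fun _ => zero_add _)

lemma path_add_zero (f : P.Path) : f + 0 = f :=
  Subtype.ext (funext fun _ => add_zero _)

instance : Zero (Tau P) := ⟨⟦(0 : P.Path)⟧⟩
instance : Add (Tau P) := ⟨addT⟩

instance : AddCommMonoid (Tau P) where
  add := addT
  zero := ⟦(0 : P.Path)⟧
  add_assoc a b c := Quotient.inductionOn₃ a b c fun f g h => by
    show addT (addT ⟦f⟧ ⟦g⟧) ⟦h⟧ = addT ⟦f⟧ (addT ⟦g⟧ ⟦h⟧)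
    rw [addT_mk, addT_mk, addT_mk, addT_mk, path_add_assoc]
  zero_add a := Quotient.inductionOn a fun f => by
    show addT ⟦(0 : P.Path)⟧ ⟦f⟧ = ⟦f⟧
    rw [addT_mk, path_zero_add]
  add_zero a := Quotient.inductionOn a fun f => by
    show addT ⟦f⟧ ⟦(0 : P.Path)⟧ = ⟦f⟧
    rw [addT_mk, path_add_zero]
  add_comm a b := Quotient.inductionOn₂ a b fun f g => by
    show addT ⟦f⟧ ⟦g⟧ = addT ⟦g⟧ ⟦f⟧
    rw [addT_mk, addT_mk, path_add_comm]
  nsmul := nsmulRec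
  nsmul_zero := fun _ => rfl
  nsmul_succ := fun _ _ => rfl

def leT : Tau P → Tau P → Prop :=
  Quotient.lift₂ pLe fun _ _ _ _ hf hg => propext
    ⟨fun h => pLe_trans hf.2 (pLe_trans h hg.1), fun h => pLe_trans hf.1 (pLe_trans h hg.2)⟩

instance : PartialOrder (Tau P) where
  le := leT
  le_refl a := Quotient.inductionOn a pLe_refl
  le_trans a b c := Quotient.inductionOn₃ a b c fun _ _ _ h1 h2 => pLe_trans h1 h2
  le_antisymm a b := Quotient.inductionOn₂ a b fun _ _ h1 h2 => Quotient.sound ⟨h1, h2⟩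

lemma leT_mk (f g : P.Path) : (⟦f⟧ : Tau P) ≤ ⟦g⟧ ↔ pLe f g := Iff.rfl

end PSgp

/-- An abstract Cuntz semigroup: a positively ordered monoid satisfying (O1)-(O4). -/
class IsCuSgp (S : Type*) [AddCommMonoid S] [PartialOrder S] : Prop where
  zero_le : ∀ a : S, 0 ≤ a
  add_mono : ∀ ⦃a b c d : S⦄, a ≤ b → c ≤ d → a + c ≤ b + d
  O1 : ∀ z : ℕ → S, Monotone z → ∃ s, IsLUB (Set.range z) s
  O2 : ∀ a : S, ∃ z : ℕ → S, (∀ n, CuWayBelow (z n) (z (n + 1))) ∧ IsLUB (Set.range z) a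
  O3 : ∀ ⦃a' a b' b : S⦄, CuWayBelow a' a → CuWayBelow b' b → CuWayBelow (a' + b') (a + b)
  O4 : ∀ z w : ℕ → S, Monotone z → Monotone w → ∀ s t : S, IsLUB (Set.range z) s →
    IsLUB (Set.range w) t → IsLUB (Set.range fun n => z n + w n) (s + t)


variable {S T : Type*} [AddCommMonoid S] [PartialOrder S] [AddCommMonoid T] [PartialOrder T]

/-- Generalized Cu-morphism: preserves addition, order, zero and suprema of
increasing sequences. -/
def IsGenCuMor (φ : S → T) : Prop :=
  φ 0 = 0 ∧ (∀ a b : S, φ (a + b) = φ a + φ b) ∧ Monotone φ ∧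
    ∀ z : ℕ → S, Monotone z → ∀ s : S, IsLUB (Set.range z) s →
      IsLUB (Set.range (φ ∘ z)) (φ s)

/-- The type of generalized Cu-morphisms from `S` to `T`. -/
def GenCuMor (S T : Type*) [AddCommMonoid S] [PartialOrder S] [AddCommMonoid T]
    [PartialOrder T] : Type _ := {φ : S → T // IsGenCuMor φ}

instance [IsCuSgp T] : Add (GenCuMor S T) :=
  ⟨fun f g => ⟨fun a => f.1 a + g.1 a, by
    obtain ⟨f0, fadd, fmono, flub⟩ := f.2
    obtain ⟨g0, gadd, gmono, glub⟩ := g.2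
    refine ⟨by dsimp only; rw [f0, g0, add_zero],
      fun a b => by dsimp only; rw [fadd, gadd, add_add_add_comm],
      fun a b hab => IsCuSgp.add_mono (fmono hab) (gmono hab), fun z hz s hs => ?_⟩
    exact IsCuSgp.O4 (f.1 ∘ z) (g.1 ∘ z) (fmono.comp hz) (gmono.comp hz) _ _
      (flub z hz s hs) (glub z hz s hs)⟩⟩

instance [IsCuSgp T] : Zero (GenCuMor S T) :=
  ⟨⟨fun _ => 0, rfl, fun _ _ => (add_zero 0).symm, fun _ _ _ => le_rfl,
    fun z _ s _ => ⟨by rintro x ⟨n, rfl⟩; exact le_rfl, fun b hb => hb ⟨0, rfl⟩⟩⟩⟩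

instance [IsCuSgp T] : AddCommMonoid (GenCuMor S T) where
  add := (· + ·)
  zero := 0
  add_assoc f g h := Subtype.ext (funext fun a => add_assoc _ _ _)
  zero_add f := Subtype.ext (funext fun a => zero_add _)
  add_zero f := Subtype.ext (funext fun a => add_zero _)
  add_comm f g := Subtype.ext (funext fun a => add_comm _ _)
  nsmul := nsmulRec
  nsmul_zero := fun _ => rfl
  nsmul_succ := fun _ _ => rfl

/-- The auxiliary relation on generalized Cu-morphisms. -/
def precCu (φ ψ : GenCuMor S T) : Prop :=
  ∀ a' a : S, CuWayBelow a' a → CuWayBelow (φ.1 a') (ψ.1 a)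

/-!
A Cu-morphism `φ` satisfies `φ ≺ φ`, so the constant path at `φ` is a path. Its class is
compact because the supremum of an increasing sequence `[hₙ]` in `τ(P)` is attained by a
diagonal path `d` whose values are values of the `hₙ`: `[const φ] ≤ [d]` puts `φ ≺ d m = hₙ t`
for some `n`. Conversely, a path `f` is the supremum of its rescalings `l ↦ f (cₖ l)` with
`cₖ → 1`, so if `[f]` is compact then `[f] ≤ [f (cₖ ·)]`, which puts every value of `f` below
`f cₖ`; hence `[f]` is the class of the constant path at `f cₖ`. Injectivity holds because
`φ ≺ ψ` forces `φ ≤ ψ` pointwise, by (O2) and the preservation of suprema.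
-/

namespace Iq

def half : Iq := ⟨1 / 2, by norm_num, by norm_num⟩

def cofinalSeq (n : ℕ) : Iq :=
  ⟨1 - 1 / (n + 2),
    sub_pos.2 ((div_lt_one (by positivity)).2 (by linarith [n.cast_nonneg (α := ℚ)])),
    sub_lt_self 1 (by positivity)⟩

lemma cofinalSeq_strictMono : StrictMono cofinalSeq := fun m n hmn => by
  show 1 - 1 / ((m : ℚ) + 2) < 1 - 1 / ((n : ℚ) + 2)
  gcongr

lemma exists_lt_cofinalSeq (l : Iq) : ∃ n, l.1 < (cofinalSeq n).1 := by
  obtain ⟨n, hn⟩ := exists_nat_one_div_lt (sub_pos.2 l.2.2)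
  refine ⟨n, ?_⟩
  have : 1 / ((n : ℚ) + 2) < 1 / (n + 1) := by gcongr; linarith
  show l.1 < 1 - 1 / ((n : ℚ) + 2)
  linarith

-- Monotone and unbounded, so its fibres cut `(0,1)` into consecutive intervals.
noncomputable def piece (l : Iq) : ℕ := Nat.find (exists_lt_cofinalSeq l)

lemma piece_mono : Monotone piece := fun _ _ hlm =>
  Nat.find_mono fun _ hn => hlm.trans_lt hn

lemma lt_piece_cofinalSeq (k : ℕ) : k < piece (cofinalSeq k) :=
  cofinalSeq_strictMono.lt_iff_lt.1 (Nat.find_spec (exists_lt_cofinalSeq (cofinalSeq k)))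

def mul (c l : Iq) : Iq :=
  ⟨c.1 * l.1, mul_pos c.2.1 l.2.1, mul_lt_one_of_nonneg_of_lt_one_left c.2.1.le c.2.2 l.2.2.le⟩

def lerp (a b x : Iq) : Iq :=
  ⟨a.1 + x.1 * (b.1 - a.1), by nlinarith [a.2.1, b.2.1, x.2.1, x.2.2],
    by nlinarith [a.2.2, b.2.2, x.2.1, x.2.2]⟩

variable {a b : Iq}

lemma lerp_strictMono (hab : a.1 < b.1) : StrictMono (lerp a b) := fun x y hxy => by
  have : x.1 < y.1 := hxy
  show a.1 + x.1 * (b.1 - a.1) < a.1 + y.1 * (b.1 - a.1)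
  nlinarith

lemma lt_lerp (hab : a.1 < b.1) (x : Iq) : a.1 < (lerp a b x).1 := by
  show a.1 < a.1 + x.1 * (b.1 - a.1)
  nlinarith [x.2.1]

lemma lerp_lt (hab : a.1 < b.1) (x : Iq) : (lerp a b x).1 < b.1 := by
  show a.1 + x.1 * (b.1 - a.1) < b.1
  nlinarith [x.2.2]

end Iq

namespace PSgp

variable {M : Type*} [AddCommMonoid M] {P : PSgp M}

def Path.const (φ : M) (hφ : P.prec φ φ) : P.Path := ⟨fun _ => φ, fun _ _ _ => hφ⟩

def Path.rescale (f : P.Path) (c : Iq) : P.Path :=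
  ⟨fun l => f.1 (Iq.mul c l), fun _ _ hlm => f.2 (mul_lt_mul_of_pos_left hlm c.2.1)⟩

def Path.restrict (f : P.Path) (a b : Iq) (hab : a.1 < b.1) : P.Path :=
  ⟨fun x => f.1 (Iq.lerp a b x), fun _ _ hxy => f.2 (Iq.lerp_strictMono hab hxy)⟩

def IsPathChain (D : ℕ → P.Path) : Prop :=
  ∀ k x y, P.prec ((D k).1 x) ((D (k + 1)).1 y)

section Concat

variable {D : ℕ → P.Path}

lemma IsPathChain.prec_of_lt (hD : IsPathChain D) {j k : ℕ} (hjk : j < k) (x y : Iq) :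
    P.prec ((D j).1 x) ((D k).1 y) := by
  induction k, hjk using Nat.le_induction generalizing y with
  | base => exact hD j x y
  | succ k _ ih => exact P.trans (ih x) (hD k x y)

noncomputable def Path.concat (D : ℕ → P.Path) (hD : IsPathChain D) : P.Path :=
  ⟨fun l => (D (Iq.piece l)).1 l, fun l m hlm => by
    rcases (Iq.piece_mono hlm.le).eq_or_lt with h | h
    · show P.prec ((D l.piece).1 l) ((D m.piece).1 m)
      rw [← h]
      exact (D _).2 hlm
    · exact hD.prec_of_lt h l m⟩

lemma IsPathChain.exists_prec_concat (hD : IsPathChain D) (k : ℕ) (x : Iq) :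
    ∃ m, P.prec ((D k).1 x) ((Path.concat D hD).1 m) :=
  ⟨Iq.cofinalSeq k, hD.prec_of_lt (Iq.lt_piece_cofinalSeq k) x _⟩

end Concat

section Tau

variable {h : ℕ → P.Path}

lemma exists_prec_and_prec (hmono : Monotone fun n => (⟦h n⟧ : Tau P)) (p q : ℕ × Iq) :
    ∃ r : ℕ × Iq, P.prec ((h p.1).1 p.2) ((h r.1).1 r.2) ∧
      P.prec ((h q.1).1 q.2) ((h r.1).1 r.2) := by
  obtain ⟨a, ha⟩ := (leT_mk _ _).1 (hmono (le_max_left p.1 q.1)) p.2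
  obtain ⟨b, hb⟩ := (leT_mk _ _).1 (hmono (le_max_right p.1 q.1)) q.2
  obtain ⟨t, ht⟩ := Iq.exists_gt (max a b)
  exact ⟨(max p.1 q.1, t), P.trans ha ((h _).2 ((le_max_left a b).trans_lt ht)),
    P.trans hb ((h _).2 ((le_max_right a b).trans_lt ht))⟩

theorem exists_path_upperBound (hmono : Monotone fun n => (⟦h n⟧ : Tau P)) :
    ∃ d : P.Path, (∀ n, pLe (h n) d) ∧ ∀ m, ∃ n t, d.1 m = (h n).1 t := by
  choose next hnext_left hnext_right using exists_prec_and_prec hmono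
  choose up hup using Iq.exists_gt
  have : Nonempty Iq := ⟨Iq.half⟩
  obtain ⟨e, he⟩ := exists_surjective_nat (ℕ × Iq)
  -- `e` enumerates all values `(h n).1 l`; the `(k + 1)`-st segment, a piece of `h (s (k + 1)).1`
  -- starting at `(s (k + 1)).2`, dominates both the `k`-th segment and the value `e k`.
  let s : ℕ → ℕ × Iq := fun k => Nat.rec (0, Iq.half) (fun k p => next (p.1, up p.2) (e k)) k
  let D : ℕ → P.Path := fun k => (h (s k).1).restrict (s k).2 (up (s k).2) (hup _)
  have hD : IsPathChain D := fun k x y =>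
    P.trans ((h _).2 (Iq.lerp_lt (hup _) x))
      (P.trans (hnext_left ((s k).1, up (s k).2) (e k)) ((h _).2 (Iq.lt_lerp (hup _) y)))
  refine ⟨Path.concat D hD, fun n l => ?_, fun m => ⟨_, _, rfl⟩⟩
  obtain ⟨k, hk⟩ := he (n, l)
  obtain ⟨m, hm⟩ := hD.exists_prec_concat (k + 1) Iq.half
  have hnl : P.prec ((h (e k).1).1 (e k).2) ((h (s (k + 1)).1).1 (s (k + 1)).2) :=
    hnext_right ((s k).1, up (s k).2) (e k)
  rw [hk] at hnl
  exact ⟨m, P.trans hnl (P.trans ((h _).2 (Iq.lt_lerp (hup _) Iq.half)) hm)⟩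

end Tau

lemma mk_const_le_mk_const_iff {φ ψ : M} (hφ : P.prec φ φ) (hψ : P.prec ψ ψ) :
    (⟦Path.const φ hφ⟧ : Tau P) ≤ ⟦Path.const ψ hψ⟧ ↔ P.prec φ ψ :=
  ⟨fun h => (h Iq.half).choose_spec, fun h _ => ⟨Iq.half, h⟩⟩

theorem cuWayBelow_mk_const (φ : M) (hφ : P.prec φ φ) :
    CuWayBelow (⟦Path.const φ hφ⟧ : Tau P) ⟦Path.const φ hφ⟧ := by
  intro z hz s hs hle
  obtain ⟨d, hd_upper, hd_values⟩ :=
    exists_path_upperBound (h := fun n => (z n).out) (by simpa only [Quotient.out_eq] using hz)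
  have hsd : s ≤ ⟦d⟧ := hs.2 <| by
    rintro _ ⟨n, rfl⟩
    rw [← Quotient.out_eq (z n)]
    exact hd_upper n
  obtain ⟨m, hm⟩ := (hle.trans hsd) Iq.half
  obtain ⟨n, t, ht⟩ := hd_values m
  refine ⟨n, ?_⟩
  rw [← Quotient.out_eq (z n)]
  exact fun _ => ⟨t, ht ▸ hm⟩

lemma isLUB_range_mk_rescale (f : P.Path) :
    IsLUB (Set.range fun n => (⟦f.rescale (Iq.cofinalSeq n)⟧ : Tau P)) ⟦f⟧ := by
  refine ⟨?_, fun b hb => ?_⟩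
  · rintro _ ⟨n, rfl⟩ l
    exact ⟨l, f.2 (mul_lt_of_lt_one_left l.2.1 (Iq.cofinalSeq n).2.2)⟩
  induction b using Quotient.inductionOn with
  | h g =>
  intro l
  obtain ⟨l', hl'⟩ := Iq.exists_gt l
  obtain ⟨n, hn⟩ :=
    Iq.exists_lt_cofinalSeq ⟨l.1 / l'.1, div_pos l.2.1 l'.2.1, (div_lt_one l'.2.1).2 hl'⟩
  obtain ⟨m, hm⟩ := hb ⟨n, rfl⟩ l'
  exact ⟨m, P.trans (f.2 ((div_lt_iff₀ l'.2.1).1 hn)) hm⟩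

theorem exists_mk_const_eq_of_cuWayBelow_self {x : Tau P} (hx : CuWayBelow x x) :
    ∃ φ hφ, (⟦Path.const φ hφ⟧ : Tau P) = x := by
  induction x using Quotient.inductionOn with
  | h f =>
  have hmono : Monotone fun n => (⟦f.rescale (Iq.cofinalSeq n)⟧ : Tau P) :=
    monotone_nat_of_le_succ fun n l =>
      ⟨l, f.2 (mul_lt_mul_of_pos_right (Iq.cofinalSeq_strictMono n.lt_succ_self) l.2.1)⟩
  obtain ⟨k, hk⟩ := hx _ hmono _ (isLUB_range_mk_rescale f) le_rfl
  set c := Iq.cofinalSeq k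
  have hbelow : ∀ l, P.prec (f.1 l) (f.1 c) := fun l =>
    let ⟨m, hm⟩ := hk l
    P.trans hm (f.2 (mul_lt_of_lt_one_right c.2.1 m.2.2))
  exact ⟨f.1 c, hbelow c,
    Quotient.sound ⟨fun _ => ⟨c, hbelow c⟩, fun l => ⟨c, hbelow l⟩⟩⟩

end PSgp

lemma CuWayBelow.le {α : Type*} [Preorder α] {x y : α} (h : CuWayBelow x y) : x ≤ y :=
  (h (fun _ => y) monotone_const y (by rw [Set.range_const]; exact isLUB_singleton)
    le_rfl).choose_spec

lemma apply_le_apply_of_precCu [IsCuSgp S] {φ ψ : GenCuMor S T} (h : precCu φ ψ) (a : S) :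
    φ.1 a ≤ ψ.1 a := by
  obtain ⟨z, hz, hlub⟩ := IsCuSgp.O2 a
  refine (φ.2.2.2.2 z (monotone_nat_of_le_succ fun n => (hz n).le) a hlub).2 ?_
  rintro _ ⟨n, rfl⟩
  exact (h _ _ (hz n)).le.trans (ψ.2.2.2.1 (hlub.1 ⟨n + 1, rfl⟩))

lemma eq_of_precCu_of_precCu [IsCuSgp S] {φ ψ : GenCuMor S T} (h₁ : precCu φ ψ)
    (h₂ : precCu ψ φ) : φ = ψ :=
  Subtype.ext <| funext fun a =>
    (apply_le_apply_of_precCu h₁ a).antisymm (apply_le_apply_of_precCu h₂ a)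

/-- Cu-morphisms `S → T` correspond naturally to compact elements of the bivariant
Cu-semigroup `[[S,T]] = τ([S,T], ≺)`: every Cu-morphism gives a constant path whose
class is compact, and every compact element arises this way. -/
theorem stmt15 [IsCuSgp S] [IsCuSgp T]
    (P : PSgp (GenCuMor S T)) (hP : ∀ φ ψ : GenCuMor S T, P.prec φ ψ ↔ precCu φ ψ) :
    (∀ φc : {φ : GenCuMor S T // ∀ ⦃a' a : S⦄, CuWayBelow a' a →
        CuWayBelow (φ.1 a') (φ.1 a)}, P.IsPath fun _ : Iq => φc.1) ∧
    ∃ e : {φ : GenCuMor S T // ∀ ⦃a' a : S⦄, CuWayBelow a' a →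
        CuWayBelow (φ.1 a') (φ.1 a)} ≃ {x : PSgp.Tau P // CuWayBelow x x},
      ∀ (φc : {φ : GenCuMor S T // ∀ ⦃a' a : S⦄, CuWayBelow a' a →
          CuWayBelow (φ.1 a') (φ.1 a)}) (f : P.Path),
        (∀ l : Iq, f.1 l = φc.1) → (e φc).1 = ⟦f⟧ := by
  have hself (φc : {φ : GenCuMor S T // ∀ ⦃a' a : S⦄, CuWayBelow a' a →
      CuWayBelow (φ.1 a') (φ.1 a)}) : P.prec φc.1 φc.1 :=
    (hP _ _).2 fun _ _ h => φc.2 h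
  let e := fun φc => (⟨⟦PSgp.Path.const φc.1 (hself φc)⟧, PSgp.cuWayBelow_mk_const _ _⟩ :
    {x : PSgp.Tau P // CuWayBelow x x})
  have he_inj : Function.Injective e := fun φc ψc h => by
    have h' : (⟦PSgp.Path.const φc.1 (hself φc)⟧ : PSgp.Tau P) =
        ⟦PSgp.Path.const ψc.1 (hself ψc)⟧ := congrArg Subtype.val h
    exact Subtype.ext <| eq_of_precCu_of_precCu
      ((hP _ _).1 ((PSgp.mk_const_le_mk_const_iff _ _).1 h'.le))
      ((hP _ _).1 ((PSgp.mk_const_le_mk_const_iff _ _).1 h'.ge))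
  have he_surj : Function.Surjective e := by
    rintro ⟨x, hx⟩
    obtain ⟨φ, hφ, rfl⟩ := PSgp.exists_mk_const_eq_of_cuWayBelow_self hx
    exact ⟨⟨φ, fun _ _ h => (hP _ _).1 hφ _ _ h⟩, rfl⟩
  refine ⟨fun φc _ _ _ => hself φc, Equiv.ofBijective e ⟨he_inj, he_surj⟩,
    fun φc f hf => ?_⟩
  show ⟦_⟧ = ⟦f⟧
  rw [show f = PSgp.Path.const φc.1 (hself φc) from Subtype.ext (funext hf)]
end

section
/- Let R be a (not necessarily commutative) Cu-semiring with multiplication map μ : R ⊗ R → R. If μ is injective, then R is commutative. (Key step: since μ(1 ⊗ a) = a = μ(a ⊗ 1), injectivity gives 1 ⊗ a = a ⊗ 1 in R ⊗ R for all a, and applying the shuffle map x⊗y⊗z ↦ y⊗x⊗z to b⊗1⊗a = b⊗a⊗1 yields 1⊗b⊗a = a⊗b⊗1, whence ba = ab.) -/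
section

variable {S T : Type*} [AddCommMonoid S] [PartialOrder S] [AddCommMonoid T] [PartialOrder T]

/-- Cu-morphism: a generalized Cu-morphism that moreover preserves way-below. -/
def IsCuMor (φ : S → T) : Prop :=
  IsGenCuMor φ ∧ ∀ ⦃a b : S⦄, CuWayBelow a b → CuWayBelow (φ a) (φ b)

end

section

variable {S T R : Type*} [AddCommMonoid S] [PartialOrder S] [AddCommMonoid T]
  [PartialOrder T] [AddCommMonoid R] [PartialOrder R]

/-- Cu-bimorphism: a generalized Cu-morphism in each variable which moreover jointly
preserves suprema of increasing sequences and the joint way-below relation. -/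
def IsCuBimor (φ : S → T → R) : Prop :=
  (∀ a : S, IsGenCuMor (φ a)) ∧ (∀ b : T, IsGenCuMor fun a => φ a b) ∧
  (∀ z : ℕ → S, ∀ w : ℕ → T, Monotone z → Monotone w → ∀ s t, IsLUB (Set.range z) s →
    IsLUB (Set.range w) t → IsLUB (Set.range fun n => φ (z n) (w n)) (φ s t)) ∧
  (∀ ⦃a' a : S⦄ ⦃b' b : T⦄, CuWayBelow a' a → CuWayBelow b' b →
    CuWayBelow (φ a' b') (φ a b))

end

universe u

/-!
Injectivity of `μ` forces every elementary tensor `a ⊗ b` to equal `1 ⊗ ab`, since both are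
sent to `ab`. The flip of `R ⊗ R`, induced by the bimorphism `(x, y) ↦ y ⊗ x`, then sends
`a ⊗ b = 1 ⊗ ab` to `ab ⊗ 1 = 1 ⊗ ab = a ⊗ b`; so `b ⊗ a = a ⊗ b`, and applying `μ` gives
`ba = ab`.
-/

theorem IsCuBimor.swap {S T P : Type*} [AddCommMonoid S] [PartialOrder S] [AddCommMonoid T]
    [PartialOrder T] [AddCommMonoid P] [PartialOrder P] {φ : S → T → P} (hφ : IsCuBimor φ) :
    IsCuBimor fun y x => φ x y := by
  obtain ⟨hleft, hright, hsup, hwaybelow⟩ := hφ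
  exact ⟨hright, hleft, fun z w hz hw s t hs ht => hsup w z hw hz t s ht hs,
    fun _ _ _ _ ha hb => hwaybelow hb ha⟩

section InjectiveMultiplication

variable {R RR : Type*} {mul : R → R → R} {one : R} {ω : R → R → RR} {μ : RR → R}

theorem tensor_eq_one_tensor_mul (hone : ∀ a, mul one a = a)
    (hμω : ∀ a b, μ (ω a b) = mul a b) (hinj : Function.Injective μ) (a b : R) :
    ω a b = ω one (mul a b) :=
  hinj (by rw [hμω, hμω, hone])

theorem mul_comm_of_tensor_swap (hone : ∀ a, mul one a = a ∧ mul a one = a)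
    (hμω : ∀ a b, μ (ω a b) = mul a b) (hinj : Function.Injective μ)
    {σ : RR → RR} (hσ : ∀ a b, σ (ω a b) = ω b a) (a b : R) :
    mul a b = mul b a := by
  have hsimple := tensor_eq_one_tensor_mul (fun a => (hone a).1) hμω hinj
  have hflip : ω b a = ω a b := calc
    ω b a = σ (ω a b) := (hσ a b).symm
    _ = ω (mul a b) one := by rw [hsimple a b, hσ]
    _ = ω a b := by rw [hsimple, (hone _).2, ← hsimple]
  rw [← hμω, ← hμω, hflip]

end InjectiveMultiplication

theorem stmt18_general {R RR : Type u} [AddCommMonoid R] [PartialOrder R] [AddCommMonoid RR]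
    [PartialOrder RR] [IsCuSgp RR]
    (mul : R → R → R)
    (one : R) (hone : ∀ a : R, mul one a = a ∧ mul a one = a)
    (ω : R → R → RR) (hω : IsCuBimor ω)
    (huniv : ∀ (P : Type u) [AddCommMonoid P] [PartialOrder P], IsCuSgp P →
      ∀ φ : R → R → P, IsCuBimor φ →
        ∃! ft : RR → P, IsCuMor ft ∧ ∀ a b : R, ft (ω a b) = φ a b)
    (μ : RR → R) (hμω : ∀ a b : R, μ (ω a b) = mul a b)
    (hinj : Function.Injective μ) :
    ∀ a b : R, mul a b = mul b a := by
  obtain ⟨σ, ⟨-, hσ⟩, -⟩ := huniv RR ‹IsCuSgp RR› _ hω.swap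
  exact mul_comm_of_tensor_swap hone hμω hinj hσ

/-- Let `R` be a (not necessarily commutative) Cu-semiring, let `RR` together with the
universal Cu-bimorphism `ω` be the tensor product `R ⊗ R` in the category `Cu`, and let
`μ : R ⊗ R → R` be the Cu-morphism induced by multiplication. If `μ` is injective,
then `R` is commutative. -/
theorem stmt18 {R RR : Type u} [AddCommMonoid R] [PartialOrder R] [AddCommMonoid RR]
    [PartialOrder RR] [IsCuSgp R] [IsCuSgp RR]
    (mul : R → R → R) (hmul : IsCuBimor mul)
    (hassoc : ∀ a b c : R, mul (mul a b) c = mul a (mul b c))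
    (one : R) (hone : ∀ a : R, mul one a = a ∧ mul a one = a)
    (ω : R → R → RR) (hω : IsCuBimor ω)
    (huniv : ∀ (P : Type u) [AddCommMonoid P] [PartialOrder P], IsCuSgp P →
      ∀ φ : R → R → P, IsCuBimor φ →
        ∃! ft : RR → P, IsCuMor ft ∧ ∀ a b : R, ft (ω a b) = φ a b)
    (μ : RR → R) (hμCu : IsCuMor μ) (hμω : ∀ a b : R, μ (ω a b) = mul a b)
    (hinj : Function.Injective μ) :
    ∀ a b : R, mul a b = mul b a :=
  stmt18_general mul one hone ω hω huniv μ hμω hinj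
end
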